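/- Fix integers m₁, m₂ ≥ 1 and positive reals α₁,…,α_{m₁}, β₁,…,β_{m₂} with α_i·β_j > 1 for all i, j. Define, for u ∈ ℍ, θ(u) = 2π − arg u, s(u) = (1/(m₁·θ(u)))·Σ_{i=1}^{m₁} (π − arg(u/(u + α_i²))) and t(u) = (1/(m₂·θ(u)))·Σ_{j=1}^{m₂} (π − arg(1 + β_j²·u)). Then for every u ∈ ℍ one has s(u) > 0, t(u) > 0 and s(u) + t(u) < 1; that is, (s(u), t(u)) lies in the interior of the triangle with vertices (0,0), (1,0), (0,1). -/
import Mathlib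


open Complex Real

private lemma arg_pos_of_im_pos {z : ℂ} (hz : 0 < z.im) : 0 < Complex.arg z := by
  rcases (Complex.arg_nonneg_iff.2 hz.le).lt_or_eq with h | h
  · exact h
  · exact absurd (Complex.arg_eq_zero_iff.1 h.symm).2 hz.ne'

private lemma arg_lt_pi_of_im_pos {z : ℂ} (hz : 0 < z.im) : Complex.arg z < Real.pi :=
  Complex.arg_lt_pi_iff.2 (Or.inr hz.ne')

private lemma arg_div_of_im_pos {z w : ℂ} (hz : 0 < z.im) (hw : 0 < w.im) :
    Complex.arg (z / w) = Complex.arg z - Complex.arg w := by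
  have hz0 : z ≠ 0 := fun h => by simp [h] at hz
  have hw0 : w ≠ 0 := fun h => by simp [h] at hw
  have hang : (Complex.arg (z / w) : Real.Angle) = ((Complex.arg z - Complex.arg w : ℝ) : Real.Angle) := by
    rw [Complex.arg_div_coe_angle hz0 hw0, Real.Angle.coe_sub]
  obtain ⟨k, hk⟩ := Real.Angle.angle_eq_iff_two_pi_dvd_sub.1 hang
  have h1 := Complex.neg_pi_lt_arg (z / w)
  have h2 := Complex.arg_le_pi (z / w)
  have h3 := arg_pos_of_im_pos hz
  have h4 := arg_lt_pi_of_im_pos hz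
  have h5 := arg_pos_of_im_pos hw
  have h6 := arg_lt_pi_of_im_pos hw
  have hpi := Real.pi_pos
  have hk0 : k = 0 := by
    rcases lt_trichotomy k 0 with h | h | h
    · have hk1 : k ≤ -1 := by omega
      have : (k : ℝ) ≤ -1 := by exact_mod_cast hk1
      nlinarith
    · exact h
    · have : (1 : ℝ) ≤ (k : ℝ) := by exact_mod_cast h
      nlinarith
  rw [hk0] at hk
  push_cast at hk
  linarith

/-- Large-`r` case: the slope `(s(u), t(u))` lies in the interior of the slope
triangle with vertices `(0,0)`, `(1,0)`, `(0,1)`. -/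
theorem slopes_in_triangle_large_r
    (m₁ m₂ : ℕ) (hm₁ : 1 ≤ m₁) (hm₂ : 1 ≤ m₂)
    (α : Fin m₁ → ℝ) (β : Fin m₂ → ℝ)
    (hα : ∀ i, 0 < α i) (hβ : ∀ j, 0 < β j)
    (hr : ∀ i j, 1 < α i * β j)
    (u : ℂ) (hu : 0 < u.im) :
    let θ : ℝ := 2 * Real.pi - Complex.arg u
    let s : ℝ := (1 / (m₁ * θ)) *
      ∑ i, (Real.pi - Complex.arg (u / (u + ((α i : ℂ)) ^ 2)))
    let t : ℝ := (1 / (m₂ * θ)) *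
      ∑ j, (Real.pi - Complex.arg (1 + ((β j : ℂ)) ^ 2 * u))
    0 < s ∧ 0 < t ∧ s + t < 1 := by
  intro θ s t
  have hpi := Real.pi_pos
  have hau1 := arg_pos_of_im_pos hu
  have hau2 := arg_lt_pi_of_im_pos hu
  have hθ : 0 < θ := by simp only [θ]; linarith
  -- imaginary parts
  have him : ∀ c : ℝ, (u + (c : ℂ)).im = u.im := by intro c; simp
  have himpos : ∀ c : ℝ, 0 < (u + (c : ℂ)).im := fun c => by rw [him c]; exact hu
  -- rewrite the s-terms
  have hs_term : ∀ i, Complex.arg (u / (u + ((α i : ℂ)) ^ 2)) =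
      Complex.arg u - Complex.arg (u + ((α i)^2 : ℝ)) := by
    intro i
    have : ((α i : ℂ))^2 = (((α i)^2 : ℝ) : ℂ) := by push_cast; ring
    rw [this, arg_div_of_im_pos hu (himpos _)]
  -- rewrite the t-terms
  have ht_term : ∀ j, Complex.arg (1 + ((β j : ℂ)) ^ 2 * u) =
      Complex.arg (u + (((β j)⁻¹^2 : ℝ) : ℂ)) := by
    intro j
    have hb := hβ j
    have hb2 : 0 < (β j)^2 := by positivity
    have hbne : ((β j : ℝ) : ℂ) ≠ 0 := by
      simpa using hb.ne'
    have : (1 + ((β j : ℂ))^2 * u) = (((β j)^2 : ℝ) : ℂ) * (u + (((β j)⁻¹^2 : ℝ) : ℂ)) := by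
      push_cast
      rw [mul_add, ← mul_pow, mul_inv_cancel₀ hbne, one_pow]
      ring
    rw [this, Complex.arg_real_mul _ hb2]
  -- positivity of individual terms
  have hspos : ∀ i, 0 < Real.pi - Complex.arg (u / (u + ((α i : ℂ)) ^ 2)) := by
    intro i
    rw [hs_term i]
    have := arg_pos_of_im_pos (himpos ((α i)^2))
    linarith
  have htpos : ∀ j, 0 < Real.pi - Complex.arg (1 + ((β j : ℂ)) ^ 2 * u) := by
    intro j
    rw [ht_term j]
    have := arg_lt_pi_of_im_pos (himpos ((β j)⁻¹^2))
    linarith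
  have hm₁' : (0 : ℝ) < m₁ := by exact_mod_cast hm₁
  have hm₂' : (0 : ℝ) < m₂ := by exact_mod_cast hm₂
  have hSpos : 0 < ∑ i, (Real.pi - Complex.arg (u / (u + ((α i : ℂ)) ^ 2))) :=
    Finset.sum_pos (fun i _ => hspos i) (by simp [Finset.univ_nonempty_iff, ← Fin.pos_iff_nonempty]; omega)
  have hTpos : 0 < ∑ j, (Real.pi - Complex.arg (1 + ((β j : ℂ)) ^ 2 * u)) :=
    Finset.sum_pos (fun j _ => htpos j) (by simp [Finset.univ_nonempty_iff, ← Fin.pos_iff_nonempty]; omega)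
  refine ⟨by positivity, by positivity, ?_⟩
  -- key pairwise inequality: arg (u + α i ^ 2) < arg (u + (β j)⁻¹ ^ 2)
  have hkey : ∀ i j, Complex.arg (u + (((α i)^2 : ℝ) : ℂ)) <
      Complex.arg (u + (((β j)⁻¹^2 : ℝ) : ℂ)) := by
    intro i j
    set z := u + (((β j)⁻¹^2 : ℝ) : ℂ) with hz
    set w := u + (((α i)^2 : ℝ) : ℂ) with hw
    have hzim : 0 < z.im := himpos _
    have hwim : 0 < w.im := himpos _
    have hlt : (β j)⁻¹^2 < (α i)^2 := by
      have hb := hβ j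
      have ha := hα i
      have := hr i j
      rw [inv_pow, inv_lt_iff_one_lt_mul₀ (by positivity)]
      nlinarith
    have hq : 0 < (z / w).im := by
      have hw0 : w ≠ 0 := fun h => by simp [h] at hwim
      rw [Complex.div_im]
      have hnorm : 0 < Complex.normSq w := Complex.normSq_pos.2 hw0
      have heq : z.im * w.re - z.re * w.im = u.im * ((α i)^2 - (β j)⁻¹^2) := by
        simp only [hz, hw, Complex.add_re, Complex.add_im, Complex.ofReal_re,
          Complex.ofReal_im, add_zero]
        ring
      rw [div_sub_div_same, heq]
      exact div_pos (mul_pos hu (by linarith)) hnorm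
    have := arg_pos_of_im_pos hq
    rw [arg_div_of_im_pos hzim hwim] at this
    linarith
  -- pairwise bound on the summands
  have hpair : ∀ i j,
      (Real.pi - Complex.arg (u / (u + ((α i : ℂ)) ^ 2))) +
      (Real.pi - Complex.arg (1 + ((β j : ℂ)) ^ 2 * u)) < θ := by
    intro i j
    rw [hs_term i, ht_term j]
    have := hkey i j
    simp only [θ]
    linarith
  -- sum up
  set S := ∑ i, (Real.pi - Complex.arg (u / (u + ((α i : ℂ)) ^ 2))) with hS
  set T := ∑ j, (Real.pi - Complex.arg (1 + ((β j : ℂ)) ^ 2 * u)) with hT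
  have hsum : (m₂ : ℝ) * S + (m₁ : ℝ) * T < (m₁ : ℝ) * m₂ * θ := by
    have h1 : (∑ i : Fin m₁, ∑ j : Fin m₂,
        ((Real.pi - Complex.arg (u / (u + ((α i : ℂ)) ^ 2))) +
         (Real.pi - Complex.arg (1 + ((β j : ℂ)) ^ 2 * u)))) <
        ∑ _i : Fin m₁, ∑ _j : Fin m₂, θ := by
      refine Finset.sum_lt_sum_of_nonempty (by simp [Finset.univ_nonempty_iff, ← Fin.pos_iff_nonempty]; omega) ?_
      intro i _
      refine Finset.sum_lt_sum_of_nonempty (by simp [Finset.univ_nonempty_iff, ← Fin.pos_iff_nonempty]; omega) ?_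
      intro j _
      exact hpair i j
    have h2 : (∑ i : Fin m₁, ∑ j : Fin m₂,
        ((Real.pi - Complex.arg (u / (u + ((α i : ℂ)) ^ 2))) +
         (Real.pi - Complex.arg (1 + ((β j : ℂ)) ^ 2 * u)))) =
        (m₂ : ℝ) * S + (m₁ : ℝ) * T := by
      have hin : ∀ i : Fin m₁, (∑ j : Fin m₂,
          ((Real.pi - Complex.arg (u / (u + ((α i : ℂ)) ^ 2))) +
           (Real.pi - Complex.arg (1 + ((β j : ℂ)) ^ 2 * u)))) =
          (m₂ : ℝ) * (Real.pi - Complex.arg (u / (u + ((α i : ℂ)) ^ 2))) + T := by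
        intro i
        rw [Finset.sum_add_distrib, Finset.sum_const, Finset.card_univ,
          Fintype.card_fin, nsmul_eq_mul, hT]
      rw [Finset.sum_congr rfl (fun i _ => hin i), Finset.sum_add_distrib,
        Finset.sum_const, Finset.card_univ, Fintype.card_fin, nsmul_eq_mul,
        ← Finset.mul_sum, hS]
    have h3 : (∑ _i : Fin m₁, ∑ _j : Fin m₂, θ) = (m₁ : ℝ) * m₂ * θ := by
      rw [Finset.sum_const, Finset.sum_const, Finset.card_univ, Finset.card_univ,
        Fintype.card_fin, Fintype.card_fin, nsmul_eq_mul, nsmul_eq_mul, mul_assoc]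
    rw [h2, h3] at h1
    exact h1
  have hst : s + t = (1 / ((m₁ : ℝ) * θ)) * S + (1 / ((m₂ : ℝ) * θ)) * T := rfl
  rw [hst]
  rw [div_mul_eq_mul_div, div_mul_eq_mul_div, one_mul, one_mul, div_add_div _ _ (by positivity) (by positivity), div_lt_one (by positivity)]
  nlinarith [mul_lt_mul_of_pos_left hsum hθ]
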